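/- arXiv:2010.12944 — 6 statements merged into one kernel-verified Lean document; each statement's English description precedes it below -/
import Mathlib

section
/- The only multisets of non-negative integers a1,...,a17 with sum 16, sum of squares 36, and (arising as row types for orbits not through fixed points in the order-7 case) first two coordinates 0, are: {4,1,1,1,1,1,1,1,1,1,1,1,1,0,0,0,0}, {3,3,1,1,1,1,1,1,1,1,1,1,0,0,0,0,0}, {3,2,2,2,1,1,1,1,1,1,1,0,0,0,0,0,0}, {2,2,2,2,2,2,1,1,1,1,0,0,0,0,0,0,0}. -/
/-- The only multisets of 17 non-negative integers with sum 16 and sum of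
squares 28 are the four listed ones. -/
theorem stmt_5 (m : Multiset ℕ) :
    (Multiset.card m = 17 ∧ m.sum = 16 ∧ (m.map (· ^ 2)).sum = 28) ↔
      (m = {4, 1, 1, 1, 1, 1, 1, 1, 1, 1, 1, 1, 1, 0, 0, 0, 0} ∨
       m = {3, 3, 1, 1, 1, 1, 1, 1, 1, 1, 1, 1, 0, 0, 0, 0, 0} ∨
       m = {3, 2, 2, 2, 1, 1, 1, 1, 1, 1, 1, 0, 0, 0, 0, 0, 0} ∨
       m = {2, 2, 2, 2, 2, 2, 1, 1, 1, 1, 0, 0, 0, 0, 0, 0, 0}) := by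
  constructor
  · rintro ⟨h1, h2, h3⟩
    have hle : ∀ a ∈ m, a ≤ 5 := by
      intro a ha
      by_contra h
      push_neg at h
      have : a ^ 2 ≤ (m.map (· ^ 2)).sum := by
        apply Multiset.single_le_sum
        · intro x _; exact Nat.zero_le x
        · exact Multiset.mem_map_of_mem _ ha
      have h36 : 36 ≤ a ^ 2 := by nlinarith
      omega
    have hm : m = Multiset.replicate (m.count 0) 0 + Multiset.replicate (m.count 1) 1
        + Multiset.replicate (m.count 2) 2 + Multiset.replicate (m.count 3) 3
        + Multiset.replicate (m.count 4) 4 + Multiset.replicate (m.count 5) 5 := by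
      ext b
      simp only [Multiset.count_add, Multiset.count_replicate]
      by_cases hb : b ≤ 5
      · interval_cases b <;> simp
      · have : m.count b = 0 := by
          rw [Multiset.count_eq_zero]
          intro hbm
          exact hb (hle b hbm)
        rw [this]
        split_ifs <;> omega
    rw [hm] at h1 h2 h3
    simp only [Multiset.card_add, Multiset.card_replicate, Multiset.sum_add,
      Multiset.sum_replicate, Multiset.map_add, Multiset.map_replicate, smul_eq_mul] at h1 h2 h3
    norm_num at h2 h3
    have key : (m.count 0 = 4 ∧ m.count 1 = 12 ∧ m.count 2 = 0 ∧ m.count 3 = 0 ∧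
          m.count 4 = 1 ∧ m.count 5 = 0) ∨
        (m.count 0 = 5 ∧ m.count 1 = 10 ∧ m.count 2 = 0 ∧ m.count 3 = 2 ∧
          m.count 4 = 0 ∧ m.count 5 = 0) ∨
        (m.count 0 = 6 ∧ m.count 1 = 7 ∧ m.count 2 = 3 ∧ m.count 3 = 1 ∧
          m.count 4 = 0 ∧ m.count 5 = 0) ∨
        (m.count 0 = 7 ∧ m.count 1 = 4 ∧ m.count 2 = 6 ∧ m.count 3 = 0 ∧
          m.count 4 = 0 ∧ m.count 5 = 0) := by
      have h5 : m.count 5 = 0 := by omega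
      have h4 : m.count 4 ≤ 1 := by omega
      have hc3 : m.count 3 ≤ 2 := by omega
      interval_cases h : m.count 4 <;> interval_cases h' : m.count 3 <;> omega
    rcases key with ⟨e0, e1, e2, e3, e4, e5⟩ | ⟨e0, e1, e2, e3, e4, e5⟩ |
      ⟨e0, e1, e2, e3, e4, e5⟩ | ⟨e0, e1, e2, e3, e4, e5⟩ <;>
      rw [e0, e1, e2, e3, e4, e5] at hm
    · left; rw [hm]; decide
    · right; left; rw [hm]; decide
    · right; right; left; rw [hm]; decide
    · right; right; right; rw [hm]; decide
  · rintro (rfl | rfl | rfl | rfl) <;> refine ⟨by decide, by decide, by decide⟩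
end

section
/- There is no group G of order 35 together with an action of G on a set of 121 points such that every element of order 5 in G fixes exactly 1 point and every element of order 7 in G fixes exactly 2 points. -/
/-!
By Cauchy, a group of order 35 has elements `a` of order 5 and `b` of order 7, and `⟨b⟩` is
normal, being the unique Sylow 7-subgroup. Conjugation by `a` is an automorphism of
`⟨b⟩` whose order divides both 5 and `φ 7 = 6`, so `a` and `b` commute. Hence `a` permutes the
two fixed points of `b`; its orbits there have length 1 or 5, so `a` fixes both of them,
contradicting the hypothesis that it fixes only one point.
-/

open Finset

theorem Sylow.subsingleton_of_index_le {G : Type*} [Group G] [Finite G] {p : ℕ} [Fact p.Prime]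
    (P : Sylow p G) (hP : (P : Subgroup G).index ≤ p) : Subsingleton (Sylow p G) := by
  have hdvd : Nat.card (Sylow p G) ∣ (P : Subgroup G).index := P.card_dvd_index
  have hmod : Nat.card (Sylow p G) % p = 1 % p := card_sylow_modEq_one p G
  have hle := Nat.le_of_dvd (Nat.pos_of_ne_zero Subgroup.index_ne_zero_of_finite) hdvd
  have hp := (Fact.out : p.Prime).two_le
  have hone : Nat.card (Sylow p G) = 1 := by
    rcases Nat.lt_or_ge (Nat.card (Sylow p G)) p with h | h
    · rwa [Nat.mod_eq_of_lt h, Nat.mod_eq_of_lt hp] at hmod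
    · have : Nat.card (Sylow p G) = p := by omega
      simp [this, Nat.mod_eq_of_lt hp] at hmod
  exact (Nat.card_eq_one_iff_unique.mp hone).1

theorem Subgroup.normal_zpowers_of_orderOf_eq_prime {G : Type*} [Group G] [Finite G] {m q : ℕ}
    [Fact q.Prime] (hG : Nat.card G = m * q) (hmq : m < q) {b : G} (hb : orderOf b = q) :
    (zpowers b).Normal := by
  have hcard : Nat.card (zpowers b) = q := by rw [Nat.card_zpowers, hb]
  have hindex : (zpowers b).index = m := by
    have := (zpowers b).card_mul_index
    rw [hcard, hG, mul_comm] at this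
    exact Nat.eq_of_mul_eq_mul_right (Fact.out : q.Prime).pos this
  have hm : 0 < m := hindex ▸ Nat.pos_of_ne_zero index_ne_zero_of_finite
  let P : Sylow q G := (IsPGroup.of_card (n := 1) (by rw [hcard, pow_one])).toSylow
    (by rw [hindex]; exact Nat.not_dvd_of_pos_of_lt hm hmq)
  have := P.subsingleton_of_index_le (by rw [IsPGroup.toSylow_coe]; omega)
  exact P.normal_of_subsingleton

theorem commute_of_mem_of_coprime_totient {G : Type*} [Group G] {H : Subgroup G} [H.Normal]
    [IsCyclic H] [Finite H] {a b : G} (hb : b ∈ H)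
    (ha : (orderOf a).Coprime (Nat.card H).totient) : Commute a b := by
  have hφ : MulAut.conjNormal (H := H) a = 1 := by
    rw [← orderOf_eq_one_iff]
    refine Nat.eq_one_of_dvd_coprimes ha (orderOf_map_dvd _ a) ?_
    rw [← IsCyclic.card_mulAut]
    exact orderOf_dvd_natCard _
  have := congrArg (fun f => ((f ⟨b, hb⟩ : H) : G)) hφ
  simp only [MulAut.conjNormal_apply, MulAut.one_apply] at this
  exact mul_inv_eq_iff_eq_mul.mp this

theorem card_filter_smul_eq_and_modEq {G α : Type*} [Group G] [MulAction G α] [Fintype α]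
    [DecidableEq α] {p : ℕ} [Fact p.Prime] {a b : G} (hab : Commute a b) (ha : orderOf a = p) :
    #{x : α | a • x = x ∧ b • x = x} ≡ #{x : α | b • x = x} [MOD p] := by
  let σ : Equiv.Perm {x : α // b • x = x} := (MulAction.toPerm a).subtypePerm fun x => by
    simp only [MulAction.toPerm_apply]
    rw [← mul_smul, ← hab.eq, mul_smul, smul_left_cancel_iff]
  have hσ : σ ^ p ^ 1 = 1 := by
    ext x
    simp only [σ, pow_one, Equiv.Perm.subtypePerm_pow, Equiv.Perm.subtypePerm_apply,
      ← MulAction.toPermHom_apply, ← map_pow, ← ha, pow_orderOf_eq_one, map_one]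
    rfl
  have hfix : σ.supportᶜ = ({x : α | a • x = x} : Finset α).subtype (fun x => b • x = x) := by
    ext x
    simp [σ, Subtype.ext_iff]
  rw [← filter_filter, ← card_subtype, ← hfix, ← Fintype.card_subtype]
  exact Equiv.Perm.card_compl_support_modEq hσ

/-- There is no group of order 35 acting on a set of 121 points such that every
element of order 5 fixes exactly 1 point and every element of order 7 fixes
exactly 2 points. -/
theorem stmt_7 (G : Type*) [Group G] [Fintype G] (hG : Fintype.card G = 35)
    [MulAction G (Fin 121)]
    (h5 : ∀ g : G, orderOf g = 5 →
      (Finset.univ.filter fun x : Fin 121 => g • x = x).card = 1)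
    (h7 : ∀ g : G, orderOf g = 7 →
      (Finset.univ.filter fun x : Fin 121 => g • x = x).card = 2) :
    False := by
  have : Fact (Nat.Prime 5) := ⟨by norm_num⟩
  have : Fact (Nat.Prime 7) := ⟨by norm_num⟩
  obtain ⟨a, ha⟩ := exists_prime_orderOf_dvd_card 5 (by rw [hG]; norm_num)
  obtain ⟨b, hb⟩ := exists_prime_orderOf_dvd_card 7 (by rw [hG]; norm_num)
  have : (Subgroup.zpowers b).Normal :=
    Subgroup.normal_zpowers_of_orderOf_eq_prime (m := 5) (by rw [Nat.card_eq_fintype_card, hG])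
      (by norm_num) hb
  have hab : Commute a b := commute_of_mem_of_coprime_totient (Subgroup.mem_zpowers b)
    (by rw [Nat.card_zpowers, ha, hb, Nat.totient_prime Fact.out]; norm_num)
  have hmod := card_filter_smul_eq_and_modEq (α := Fin 121) hab ha
  have hle : #{x : Fin 121 | a • x = x ∧ b • x = x} ≤ #{x : Fin 121 | a • x = x} :=
    card_le_card (monotone_filter_right _ fun _ _ => And.left)
  rw [h7 b hb] at hmod
  rw [h5 a ha] at hle
  unfold Nat.ModEq at hmod
  omega
end

section
/- There is no action of the cyclic group Z21 on a set of 121 points in which every element of order 3 fixes exactly 1 or 7 points and every element of order 7 fixes exactly 2 points. -/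
/-- There is no action of the cyclic group `Z21` on a set of 121 points in
which every element of order 3 fixes exactly 1 or 7 points and every element of
order 7 fixes exactly 2 points. -/
theorem stmt_8 [MulAction (Multiplicative (ZMod 21)) (Fin 121)]
    (h3 : ∀ g : Multiplicative (ZMod 21), orderOf g = 3 →
      (Finset.univ.filter fun x : Fin 121 => g • x = x).card = 1 ∨
      (Finset.univ.filter fun x : Fin 121 => g • x = x).card = 7)
    (h7 : ∀ g : Multiplicative (ZMod 21), orderOf g = 7 →
      (Finset.univ.filter fun x : Fin 121 => g • x = x).card = 2) :
    False := by
  classical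
  haveI : Fact (Nat.Prime 3) := ⟨by norm_num⟩
  haveI : Fact (Nat.Prime 7) := ⟨by norm_num⟩
  set g : Multiplicative (ZMod 21) := Multiplicative.ofAdd (7 : ZMod 21) with hg
  set h : Multiplicative (ZMod 21) := Multiplicative.ofAdd (3 : ZMod 21) with hh
  have hg3 : g ^ 3 = 1 := by decide
  have hh7 : h ^ 7 = 1 := by decide
  have og : orderOf g = 3 := orderOf_eq_prime hg3 (by decide)
  have oh : orderOf h = 7 := orderOf_eq_prime hh7 (by decide)
  have comm : ∀ (a : Multiplicative (ZMod 21)) (x : Fin 121),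
      g • (a • x) = a • (g • x) := by
    intro a x
    rw [smul_smul, smul_smul, mul_comm]
  set Fg : Finset (Fin 121) := Finset.univ.filter fun x => g • x = x with hFg
  set Fh : Finset (Fin 121) := Finset.univ.filter fun x => h • x = x with hFh
  have cardFh : Fh.card = 2 := h7 h oh
  -- Fix(h) ⊆ Fix(g)
  have hsub : Fh ⊆ Fg := by
    intro x hx
    have hx' : h • x = x := (Finset.mem_filter.mp hx).2
    have m1 : g • x ∈ Fh := by
      simp only [hFh, Finset.mem_filter, Finset.mem_univ, true_and]
      rw [← comm, hx']
    have m2 : g • g • x ∈ Fh := by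
      simp only [hFh, Finset.mem_filter, Finset.mem_univ, true_and]
      rw [← comm, (Finset.mem_filter.mp m1).2]
    by_contra hgx
    have hgx' : g • x ≠ x := fun e => hgx (by
      simp only [hFg, Finset.mem_filter, Finset.mem_univ, true_and]; exact e)
    have ne2 : g • g • x ≠ g • x := fun e => hgx' (MulAction.injective g e)
    have ne3 : g • g • x ≠ x := by
      intro e
      apply hgx'
      have e3 : g • g • g • x = g • x := by rw [e]
      simp only [smul_smul] at e3
      rw [show g * (g * g) = 1 by decide, one_smul] at e3
      exact e3.symm
    have hss : ({x, g • x, g • g • x} : Finset (Fin 121)) ⊆ Fh := by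
      intro y hy
      simp only [Finset.mem_insert, Finset.mem_singleton] at hy
      rcases hy with rfl | rfl | rfl
      · exact hx
      · exact m1
      · exact m2
    have hc3 : ({x, g • x, g • g • x} : Finset (Fin 121)).card = 3 := by
      rw [Finset.card_insert_of_notMem (by simp [hgx'.symm, ne3.symm]),
        Finset.card_insert_of_notMem (by simp [ne2.symm]), Finset.card_singleton]
    have := Finset.card_le_card hss
    omega
  have cardFg : Fg.card = 7 := by
    have hle : Fh.card ≤ Fg.card := Finset.card_le_card hsub
    rcases h3 g og with h1 | h7'
    · have h1' : Fg.card = 1 := h1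
      omega
    · exact h7'
  -- permutation induced by h on Fix(g)
  set σ : Equiv.Perm {x : Fin 121 // g • x = x} :=
    { toFun := fun x => ⟨h • x.1, by rw [comm, x.2]⟩
      invFun := fun x => ⟨h⁻¹ • x.1, by rw [comm, x.2]⟩
      left_inv := fun x => by simp
      right_inv := fun x => by simp } with hσ
  have hpow : ∀ (n : ℕ) (x : {x : Fin 121 // g • x = x}),
      ((σ ^ n) x : Fin 121) = h ^ n • (x : Fin 121) := by
    intro n
    induction n with
    | zero => intro x; simp
    | succ n ih =>
      intro x
      rw [pow_succ, Equiv.Perm.mul_apply, ih (σ x)]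
      show h ^ n • (h • (x : Fin 121)) = h ^ (n + 1) • (x : Fin 121)
      rw [smul_smul, ← pow_succ]
  have hσ7 : σ ^ 7 = 1 := by
    refine Equiv.ext fun x => Subtype.ext ?_
    rw [hpow 7 x, hh7, one_smul]
    rfl
  have horder : orderOf σ ∣ 7 := orderOf_dvd_of_pow_eq_one hσ7
  have hdvd : (7 : ℕ) ∣ σ.support.card := by
    rw [← Equiv.Perm.sum_cycleType]
    apply Multiset.dvd_sum
    intro n hn
    have h2 : 2 ≤ n := Equiv.Perm.two_le_of_mem_cycleType hn
    have hd : n ∣ 7 := dvd_trans (Multiset.dvd_lcm hn)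
      (by rw [Equiv.Perm.lcm_cycleType]; exact horder)
    rcases (Nat.Prime.eq_one_or_self_of_dvd (by norm_num) n hd) with rfl | rfl
    · omega
    · exact dvd_refl 7
  -- count support
  have cardsub : Fintype.card {x : Fin 121 // g • x = x} = 7 := by
    rw [Fintype.card_subtype]
    exact cardFg
  have cardfix : (Finset.univ.filter fun x : {x : Fin 121 // g • x = x} => σ x = x).card = 2 := by
    rw [← cardFh]
    apply Finset.card_bij (fun x _ => x.1)
    · intro a ha
      simp only [Finset.mem_filter, Finset.mem_univ, true_and, hFh] at ha ⊢
      exact congrArg Subtype.val ha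
    · intro a _ b _ hab
      exact Subtype.ext hab
    · intro b hb
      have hbg : g • b = b := (Finset.mem_filter.mp (hsub hb)).2
      refine ⟨⟨b, hbg⟩, ?_, rfl⟩
      simp only [Finset.mem_filter, Finset.mem_univ, true_and]
      exact Subtype.ext (Finset.mem_filter.mp hb).2
  have cardsupp : σ.support.card = 5 := by
    have hsplit := Finset.card_filter_add_card_filter_not
      (s := (Finset.univ : Finset {x : Fin 121 // g • x = x}))
      (p := fun x => σ x = x)
    have hss : σ.support = Finset.univ.filter fun x => ¬ σ x = x := by
      ext x; simp [Equiv.Perm.mem_support]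
    rw [hss]
    rw [Finset.card_univ, cardsub, cardfix] at hsplit
    omega
  rw [cardsupp] at hdvd
  omega
end

section
/- There is no action of the cyclic group Z10 = Z2 × Z5 on a set of 121 points such that the element of order 5 fixes exactly 1 point and every involution fixes exactly 9 or 13 points. -/
open MulAction

/-- There is no action of the cyclic group `Z10` on a set of 121 points such
that every element of order 5 fixes exactly 1 point and every involution fixes
exactly 9 or 13 points. -/
theorem stmt_9 [MulAction (Multiplicative (ZMod 10)) (Fin 121)]
    (h5 : ∀ g : Multiplicative (ZMod 10), orderOf g = 5 →
      (Finset.univ.filter fun x : Fin 121 => g • x = x).card = 1)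
    (h2 : ∀ g : Multiplicative (ZMod 10), orderOf g = 2 →
      (Finset.univ.filter fun x : Fin 121 => g • x = x).card = 9 ∨
      (Finset.univ.filter fun x : Fin 121 => g • x = x).card = 13) :
    False := by
  set a : Multiplicative (ZMod 10) := Multiplicative.ofAdd (2 : ZMod 10) with ha
  set b : Multiplicative (ZMod 10) := Multiplicative.ofAdd (5 : ZMod 10) with hb
  have hoa : orderOf a = 5 := by
    rw [ha, orderOf_ofAdd_eq_addOrderOf]
    have : (2 : ZMod 10) = ((2 : ℕ) : ZMod 10) := by norm_cast
    rw [this, ZMod.addOrderOf_coe 2 (by norm_num)]; decide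
  have hob : orderOf b = 2 := by
    rw [hb, orderOf_ofAdd_eq_addOrderOf]
    have : (5 : ZMod 10) = ((5 : ℕ) : ZMod 10) := by norm_cast
    rw [this, ZMod.addOrderOf_coe 5 (by norm_num)]; decide
  -- the homomorphism ZMod 5 → ZMod 10 sending 1 to 2
  have h52 : (5 : ℤ) • (2 : ZMod 10) = 0 := by decide
  set ψ : ZMod 5 →+ ZMod 10 := ZMod.lift 5 ⟨zmultiplesHom (ZMod 10) 2, h52⟩ with hψ
  set φ : Multiplicative (ZMod 5) →* Multiplicative (ZMod 10) :=
    AddMonoidHom.toMultiplicative ψ with hφ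
  have hφ1 : φ (Multiplicative.ofAdd (1 : ZMod 5)) = a := by
    show Multiplicative.ofAdd (ψ 1) = a
    have : ψ 1 = 2 := by
      rw [hψ]
      have : (1 : ZMod 5) = ((1 : ℤ) : ZMod 5) := by norm_cast
      rw [this, ZMod.lift_coe]
      simp [zmultiplesHom]
    rw [this, ha]
  -- the fixed set of b as a type with an action of Multiplicative (ZMod 5)
  set S := {x : Fin 121 // b • x = x} with hS
  letI : MulAction (Multiplicative (ZMod 5)) S :=
    { smul := fun g x => ⟨φ g • x.1, by
        rw [smul_smul, mul_comm, ← smul_smul, x.2]⟩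
      one_smul := fun x => by
        apply Subtype.ext
        show φ 1 • x.1 = x.1
        rw [map_one, one_smul]
      mul_smul := fun g h x => by
        apply Subtype.ext
        show φ (g * h) • x.1 = φ g • (φ h • x.1)
        rw [map_mul, mul_smul] }
  haveI : Fact (Nat.Prime 5) := ⟨by norm_num⟩
  have hpg : IsPGroup 5 (Multiplicative (ZMod 5)) := by
    exact IsPGroup.of_card (n := 1) (by simp)
  have hmod := hpg.card_modEq_card_fixedPoints S
  -- fixed points of this action inject into the fixed set of a
  have hinj : Nat.card (fixedPoints (Multiplicative (ZMod 5)) S) ≤ 1 := by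
    have h1 : (Finset.univ.filter fun x : Fin 121 => a • x = x).card = 1 := h5 a hoa
    have : Nat.card (fixedPoints (Multiplicative (ZMod 5)) S) ≤
        Nat.card {x : Fin 121 // a • x = x} := by
      apply Nat.card_le_card_of_injective
        (fun z => ⟨z.1.1, by
          have := z.2 (Multiplicative.ofAdd (1 : ZMod 5))
          have h' : φ (Multiplicative.ofAdd (1 : ZMod 5)) • z.1.1 = z.1.1 :=
            congrArg Subtype.val this
          rwa [hφ1] at h'⟩)
      intro u v huv
      apply Subtype.ext; apply Subtype.ext
      simpa [Subtype.ext_iff] using huv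
    refine this.trans ?_
    rw [Nat.card_eq_fintype_card, Fintype.card_subtype, h1]
  have hcardS : Nat.card S = 9 ∨ Nat.card S = 13 := by
    rw [hS, Nat.card_eq_fintype_card, Fintype.card_subtype]
    exact h2 b hob
  unfold Nat.ModEq at hmod
  rcases hcardS with h | h <;> omega
end

section
/- Suppose a group G acts on a symmetric 2-(v,k,λ) design with point orbits of sizes ω_1,...,ω_t and block orbits of sizes Ω_1,...,Ω_t, and orbit matrix entries γ_{ir} as above. Then for all block-orbit indices i ≠ j: Σ_{r=1}^{t} (Ω_j/ω_r) γ_{ir} γ_{jr} = λ Ω_j. -/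
open Finset MulAction
open scoped Classical

lemma swap_count {α β : Type*} (s : Finset α) (t : Finset β) (R : α → β → Prop)
    [∀ a b, Decidable (R a b)] :
    ∑ a ∈ s, (t.filter (fun b => R a b)).card = ∑ b ∈ t, (s.filter (fun a => R a b)).card := by
  simp_rw [Finset.card_filter]
  exact Finset.sum_comm

lemma repl (P L : Type*) [Fintype P] [Fintype L] [DecidableEq P]
    (v k lam : ℕ)
    (hP : Fintype.card P = v) (hL : Fintype.card L = v)
    (hk2 : 2 ≤ k) (hkv : k < v)
    (Inc : L → Finset P)
    (hsize : ∀ l, (Inc l).card = k)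
    (hpair : ∀ p q : P, p ≠ q →
      (Finset.univ.filter fun l => p ∈ Inc l ∧ q ∈ Inc l).card = lam) :
    (∀ p : P, (Finset.univ.filter fun l => p ∈ Inc l).card = k) ∧ lam * (v-1) = k * (k-1) := by
  have hv : 0 < v := by omega
  have key : ∀ p : P, (Finset.univ.filter fun l => p ∈ Inc l).card * (k-1) = lam * (v-1) := by
    intro p
    have hs := swap_count (Finset.univ.erase p) (Finset.univ : Finset L)
      (fun q l => p ∈ Inc l ∧ q ∈ Inc l)
    have lhs : ∑ q ∈ Finset.univ.erase p,
        ((Finset.univ : Finset L).filter (fun l => p ∈ Inc l ∧ q ∈ Inc l)).card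
        = (v-1) * lam := by
      rw [Finset.sum_congr rfl (fun q hq => hpair p q (Ne.symm (Finset.ne_of_mem_erase hq)))]
      rw [Finset.sum_const, Finset.card_erase_of_mem (Finset.mem_univ p), Finset.card_univ, hP,
        smul_eq_mul]
    have rhs : ∑ l : L, ((Finset.univ.erase p).filter (fun q => p ∈ Inc l ∧ q ∈ Inc l)).card
        = (Finset.univ.filter fun l => p ∈ Inc l).card * (k-1) := by
      have : ∀ l : L, ((Finset.univ.erase p).filter (fun q => p ∈ Inc l ∧ q ∈ Inc l)).card
          = if p ∈ Inc l then k - 1 else 0 := by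
        intro l
        by_cases h : p ∈ Inc l
        · have : (Finset.univ.erase p).filter (fun q => p ∈ Inc l ∧ q ∈ Inc l)
              = (Inc l).erase p := by
            ext q; simp [Finset.mem_erase, h, and_comm]
          rw [this, Finset.card_erase_of_mem h, hsize, if_pos h]
        · simp [h]
      simp_rw [this]
      rw [Finset.sum_ite, Finset.sum_const, Finset.sum_const_zero, add_zero, smul_eq_mul,
        mul_comm]
    rw [lhs, rhs] at hs
    rw [mul_comm (v-1) lam] at hs; exact hs.symm
  -- all replication numbers equal
  have req : ∀ p q : P, (Finset.univ.filter fun l => p ∈ Inc l).card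
      = (Finset.univ.filter fun l => q ∈ Inc l).card := by
    intro p q
    have := (key p).trans (key q).symm
    exact Nat.eq_of_mul_eq_mul_right (by omega) this
  have total : ∑ p : P, (Finset.univ.filter fun l => p ∈ Inc l).card = v * k := by
    have hs := swap_count (Finset.univ : Finset P) (Finset.univ : Finset L)
      (fun p l => p ∈ Inc l)
    rw [hs]
    have : ∀ l : L, ((Finset.univ : Finset P).filter (fun p => p ∈ Inc l)).card = k := by
      intro l; rw [Finset.filter_mem_eq_inter, Finset.univ_inter, hsize]
    simp_rw [this]
    rw [Finset.sum_const, Finset.card_univ, hL, smul_eq_mul]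
  have hPne : Nonempty P := by
    rw [← Fintype.card_pos_iff, hP]; exact hv
  obtain ⟨p₀⟩ := hPne
  have tot2 : v * (Finset.univ.filter fun l => p₀ ∈ Inc l).card = v * k := by
    rw [← total, Finset.sum_congr rfl (fun q _ => req q p₀), Finset.sum_const,
      Finset.card_univ, hP, smul_eq_mul]
  have hr : (Finset.univ.filter fun l => p₀ ∈ Inc l).card = k :=
    Nat.eq_of_mul_eq_mul_left hv tot2
  constructor
  · intro p; rw [req p p₀, hr]
  · rw [← key p₀, hr, mul_comm]

lemma dualpair (P L : Type*) [Fintype P] [Fintype L] [DecidableEq P]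
    (v k lam : ℕ)
    (hP : Fintype.card P = v) (hL : Fintype.card L = v)
    (hk2 : 2 ≤ k) (hkv : k < v)
    (Inc : L → Finset P)
    (hsize : ∀ l, (Inc l).card = k)
    (hpair : ∀ p q : P, p ≠ q →
      (Finset.univ.filter fun l => p ∈ Inc l ∧ q ∈ Inc l).card = lam) :
    ∀ b b' : L, b ≠ b' → (Inc b ∩ Inc b').card = lam := by
  obtain ⟨hrepl, hlam⟩ := repl P L v k lam hP hL hk2 hkv Inc hsize hpair
  intro b b' hne
  -- x c = |Inc b ∩ Inc c|
  set x : L → ℕ := fun c => (Inc b ∩ Inc c).card with hx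
  -- lam ≥ 1
  have hlam1 : 1 ≤ lam := by
    obtain ⟨p, hp, q, hq, hpq⟩ := Finset.one_lt_card.mp (by rw [hsize]; omega :
      1 < (Inc b).card)
    rw [← hpair p q hpq]
    exact Finset.card_pos.mpr ⟨b, by simp [hp, hq]⟩
  -- S1 : ∑ over c ≠ b of x c = k*(k-1)
  have S1 : ∑ c ∈ Finset.univ.erase b, x c = k * (k-1) := by
    have hs := swap_count (Finset.univ.erase b) (Inc b) (fun c p => p ∈ Inc c)
    have l1 : ∀ c, ((Inc b).filter (fun p => p ∈ Inc c)).card = x c := by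
      intro c
      have he : (Inc b).filter (fun p => p ∈ Inc c) = Inc b ∩ Inc c := by
        ext p; simp
      rw [he, hx]
    have l2 : ∀ p ∈ Inc b, ((Finset.univ.erase b).filter (fun c => p ∈ Inc c)).card = k - 1 := by
      intro p hp
      have : (Finset.univ.erase b).filter (fun c => p ∈ Inc c)
          = (Finset.univ.filter (fun c => p ∈ Inc c)).erase b := by
        ext c; simp [Finset.mem_erase, and_assoc, and_comm]
      rw [this, Finset.card_erase_of_mem (by simp [hp]), hrepl p]
    calc ∑ c ∈ Finset.univ.erase b, x c
        = ∑ c ∈ Finset.univ.erase b, ((Inc b).filter (fun p => p ∈ Inc c)).card :=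
          Finset.sum_congr rfl (fun c _ => (l1 c).symm)
      _ = ∑ p ∈ Inc b, ((Finset.univ.erase b).filter (fun c => p ∈ Inc c)).card := hs
      _ = ∑ p ∈ Inc b, (k-1) := Finset.sum_congr rfl l2
      _ = k * (k-1) := by rw [Finset.sum_const, hsize, smul_eq_mul]
  -- S2 : ∑ over c ≠ b of x c * x c = k*(k-1)*lam
  have S2 : ∑ c ∈ Finset.univ.erase b, x c * x c = k * (k-1) * lam := by
    have hs := swap_count (Finset.univ.erase b) ((Inc b).offDiag)
      (fun c pq => pq.1 ∈ Inc c ∧ pq.2 ∈ Inc c)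
    have l1 : ∀ c, ((Inc b).offDiag.filter (fun pq => pq.1 ∈ Inc c ∧ pq.2 ∈ Inc c)).card
        = x c * x c - x c := by
      intro c
      have : (Inc b).offDiag.filter (fun pq => pq.1 ∈ Inc c ∧ pq.2 ∈ Inc c)
          = (Inc b ∩ Inc c).offDiag := by
        ext pq; simp [Finset.mem_offDiag]; tauto
      rw [this, Finset.offDiag_card]
    have l2 : ∀ pq ∈ (Inc b).offDiag,
        (((Finset.univ.erase b)).filter (fun c => pq.1 ∈ Inc c ∧ pq.2 ∈ Inc c)).card
        = lam - 1 := by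
      intro pq hpq
      rw [Finset.mem_offDiag] at hpq
      have : (Finset.univ.erase b).filter (fun c => pq.1 ∈ Inc c ∧ pq.2 ∈ Inc c)
          = (Finset.univ.filter (fun c => pq.1 ∈ Inc c ∧ pq.2 ∈ Inc c)).erase b := by
        ext c; simp [Finset.mem_erase, and_assoc, and_comm]
      rw [this, Finset.card_erase_of_mem (by simp [hpq.1, hpq.2.1]),
        hpair pq.1 pq.2 hpq.2.2]
    have step : ∑ c ∈ Finset.univ.erase b, (x c * x c - x c) = (k * k - k) * (lam - 1) := by
      calc ∑ c ∈ Finset.univ.erase b, (x c * x c - x c)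
          = ∑ c ∈ Finset.univ.erase b,
            ((Inc b).offDiag.filter (fun pq => pq.1 ∈ Inc c ∧ pq.2 ∈ Inc c)).card :=
            Finset.sum_congr rfl (fun c _ => (l1 c).symm)
        _ = ∑ pq ∈ (Inc b).offDiag,
            ((Finset.univ.erase b).filter (fun c => pq.1 ∈ Inc c ∧ pq.2 ∈ Inc c)).card := hs
        _ = ∑ pq ∈ (Inc b).offDiag, (lam - 1) := Finset.sum_congr rfl l2
        _ = (k * k - k) * (lam - 1) := by
            rw [Finset.sum_const, Finset.offDiag_card, hsize, smul_eq_mul]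
    have hxle : ∀ c, x c ≤ x c * x c := by
      intro c
      rcases Nat.eq_zero_or_pos (x c) with h | h
      · simp [h]
      · exact Nat.le_mul_of_pos_left _ h
    have split : ∑ c ∈ Finset.univ.erase b, x c * x c
        = (∑ c ∈ Finset.univ.erase b, (x c * x c - x c)) + ∑ c ∈ Finset.univ.erase b, x c := by
      rw [← Finset.sum_add_distrib]
      exact Finset.sum_congr rfl (fun c _ => (Nat.sub_add_cancel (hxle c)).symm)
    rw [split, step, S1]
    have hkk : k * k - k = k * (k - 1) := by
      have := Nat.mul_sub k k 1
      simpa using this.symm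
    rw [hkk]
    obtain ⟨m, rfl⟩ : ∃ m, lam = m + 1 := ⟨lam - 1, by omega⟩
    simp [Nat.add_sub_cancel, Nat.mul_succ]
  -- now work over ℚ
  have hcard : (Finset.univ.erase b).card = v - 1 := by
    rw [Finset.card_erase_of_mem (Finset.mem_univ b), Finset.card_univ, hL]
  set A : ℚ := ((k * (k - 1) : ℕ) : ℚ) with hA
  set B : ℚ := ((v - 1 : ℕ) : ℚ) with hB
  have hlamQ : (lam : ℚ) * B = A := by rw [hA, hB]; exact_mod_cast hlam
  have e1 : ∑ c ∈ Finset.univ.erase b, (x c : ℚ) = A := by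
    rw [hA]; exact_mod_cast congrArg (Nat.cast : ℕ → ℚ) S1
  have e2 : ∑ c ∈ Finset.univ.erase b, (x c : ℚ) * (x c : ℚ) = A * lam := by
    have h : ((∑ c ∈ Finset.univ.erase b, x c * x c : ℕ) : ℚ) = ((k * (k-1) * lam : ℕ) : ℚ) := by
      rw [S2]
    rw [hA]; exact_mod_cast h
  have hzero : ∑ c ∈ Finset.univ.erase b, ((x c : ℚ) - lam) ^ 2 = 0 := by
    have he : ∀ c ∈ Finset.univ.erase b, ((x c : ℚ) - lam) ^ 2
        = ((x c : ℚ) * (x c : ℚ) - 2 * lam * (x c : ℚ)) + (lam : ℚ) ^ 2 :=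
      fun c _ => by ring
    rw [Finset.sum_congr rfl he, Finset.sum_add_distrib, Finset.sum_sub_distrib, e2,
      ← Finset.mul_sum, e1, Finset.sum_const, hcard, nsmul_eq_mul, ← hB]
    linear_combination (lam : ℚ) * hlamQ
  have each := (Finset.sum_eq_zero_iff_of_nonneg (fun c _ => sq_nonneg _)).mp hzero b'
    (Finset.mem_erase.mpr ⟨hne.symm, Finset.mem_univ b'⟩)
  have hx' : (x b' : ℚ) = lam := by
    have := sq_eq_zero_iff.mp each
    linarith
  exact_mod_cast hx'

/-- Orbit matrix equations (off-diagonal case) for a group `G` acting on a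
symmetric 2-(v,k,λ) design, with point-orbit representatives `po r`,
block-orbit representatives `bo i`, and orbit matrix entries
`γ i r = |Inc(bo i) ∩ orbit(po r)|`: for block-orbit indices `i ≠ j`,
`∑ r, (Ω j / ω r) * γ i r * γ j r = λ * Ω j`. -/
theorem stmt_15 (P L : Type*) [Fintype P] [Fintype L] [DecidableEq P]
    (v k lam t : ℕ)
    (hP : Fintype.card P = v) (hL : Fintype.card L = v)
    (hk2 : 2 ≤ k) (hkv : k < v)
    (Inc : L → Finset P)
    (hsize : ∀ l, (Inc l).card = k)
    (hpair : ∀ p q : P, p ≠ q →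
      (Finset.univ.filter fun l => p ∈ Inc l ∧ q ∈ Inc l).card = lam)
    (G : Type*) [Group G] [MulAction G P] [MulAction G L]
    (hcompat : ∀ (g : G) (l : L) (p : P), p ∈ Inc l ↔ g • p ∈ Inc (g • l))
    (po : Fin t → P) (bo : Fin t → L)
    (hpo : ∀ p : P, ∃! r : Fin t, p ∈ MulAction.orbit G (po r))
    (hbo : ∀ l : L, ∃! i : Fin t, l ∈ MulAction.orbit G (bo i)) :
    ∀ i j : Fin t, i ≠ j →
      (∑ r : Fin t,
        ((Nat.card (MulAction.orbit G (bo j)) : ℚ) /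
            (Nat.card (MulAction.orbit G (po r)) : ℚ)) *
          (Set.ncard ((Inc (bo i) : Set P) ∩ MulAction.orbit G (po r)) : ℚ) *
          (Set.ncard ((Inc (bo j) : Set P) ∩ MulAction.orbit G (po r)) : ℚ))
        = lam * (Nat.card (MulAction.orbit G (bo j)) : ℚ) := by
  classical
  intro i j hij
  have hdual := dualpair P L v k lam hP hL hk2 hkv Inc hsize hpair
  set Oj : Finset L := (Set.toFinite (MulAction.orbit G (bo j))).toFinset with hOjdef
  set Orb : Fin t → Finset P :=
    fun r => (Set.toFinite (MulAction.orbit G (po r))).toFinset with hOrbdef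
  have memOj : ∀ l : L, l ∈ Oj ↔ l ∈ MulAction.orbit G (bo j) :=
    fun l => Set.Finite.mem_toFinset _
  have memOrb : ∀ (r : Fin t) (p : P), p ∈ Orb r ↔ p ∈ MulAction.orbit G (po r) :=
    fun r p => Set.Finite.mem_toFinset _
  have cardOj : (Nat.card (MulAction.orbit G (bo j)) : ℕ) = Oj.card := by
    rw [Nat.card_coe_set_eq, Set.ncard_eq_toFinset_card _ (Set.toFinite _)]
  have cardOrb : ∀ r : Fin t, (Nat.card (MulAction.orbit G (po r)) : ℕ) = (Orb r).card :=
    fun r => by rw [Nat.card_coe_set_eq, Set.ncard_eq_toFinset_card _ (Set.toFinite _)]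
  have gcast : ∀ (l : L) (r : Fin t), Set.ncard ((Inc l : Set P) ∩ MulAction.orbit G (po r))
      = ((Inc l).filter (· ∈ Orb r)).card := by
    intro l r
    have he : ((Inc l : Set P) ∩ MulAction.orbit G (po r)) = ↑((Inc l).filter (· ∈ Orb r)) := by
      ext p; simp [memOrb]
    rw [he, Set.ncard_coe_finset]
  -- invariance of orbits under the action
  have invP : ∀ (g : G) (p x : P), p ∈ MulAction.orbit G x → g • p ∈ MulAction.orbit G x := by
    rintro g p x ⟨h, hh⟩
    exact ⟨g * h, show (g * h) • x = g • p by rw [← hh]; exact mul_smul g h x⟩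
  have invL : ∀ (g : G) (l x : L), l ∈ MulAction.orbit G x → g • l ∈ MulAction.orbit G x := by
    rintro g l x ⟨h, hh⟩
    exact ⟨g * h, show (g * h) • x = g • l by rw [← hh]; exact mul_smul g h x⟩
  set N : P → ℕ := fun p => (Oj.filter (fun l => p ∈ Inc l)).card with hN
  -- N is constant on point orbits
  have key1 : ∀ (g : G) (p : P), N (g • p) = N p := by
    intro g p
    rw [hN]
    refine Finset.card_bij' (fun l _ => g⁻¹ • l) (fun l _ => g • l) ?_ ?_ ?_ ?_
    · intro l hl
      rw [Finset.mem_filter] at hl ⊢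
      refine ⟨(memOj _).mpr (invL g⁻¹ l _ ((memOj _).mp hl.1)), ?_⟩
      have h2 := (hcompat g⁻¹ l (g • p)).mp hl.2
      rwa [inv_smul_smul] at h2
    · intro l hl
      rw [Finset.mem_filter] at hl ⊢
      exact ⟨(memOj _).mpr (invL g l _ ((memOj _).mp hl.1)), (hcompat g l p).mp hl.2⟩
    · intro l _; exact smul_inv_smul g l
    · intro l _; exact inv_smul_smul g l
  -- γ is constant on block orbits
  have key2 : ∀ (g : G) (l : L) (r : Fin t),
      ((Inc (g • l)).filter (· ∈ Orb r)).card = ((Inc l).filter (· ∈ Orb r)).card := by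
    intro g l r
    refine Finset.card_bij' (fun p _ => g⁻¹ • p) (fun p _ => g • p) ?_ ?_ ?_ ?_
    · intro p hp
      rw [Finset.mem_filter] at hp ⊢
      constructor
      · have h2 := (hcompat g⁻¹ (g • l) p).mp hp.1
        rwa [inv_smul_smul] at h2
      · exact (memOrb _ _).mpr (invP g⁻¹ p _ ((memOrb _ _).mp hp.2))
    · intro p hp
      rw [Finset.mem_filter] at hp ⊢
      exact ⟨(hcompat g l p).mp hp.1, (memOrb _ _).mpr (invP g p _ ((memOrb _ _).mp hp.2))⟩
    · intro p _; exact smul_inv_smul g p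
    · intro p _; exact inv_smul_smul g p
  -- sum of N over a point orbit
  have sumN : ∀ r : Fin t, ∑ p ∈ Orb r, N p
      = Oj.card * ((Inc (bo j)).filter (· ∈ Orb r)).card := by
    intro r
    have hs := swap_count (Orb r) Oj (fun p l => p ∈ Inc l)
    have l1 : ∀ l ∈ Oj, ((Orb r).filter (fun p => p ∈ Inc l)).card
        = ((Inc (bo j)).filter (· ∈ Orb r)).card := by
      intro l hl
      obtain ⟨g, rfl⟩ := (memOj l).mp hl
      rw [← key2 g (bo j) r]
      congr 1
      ext p; simp only [Finset.mem_filter]; tauto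
    calc ∑ p ∈ Orb r, N p
        = ∑ l ∈ Oj, ((Orb r).filter (fun p => p ∈ Inc l)).card := hs
      _ = ∑ l ∈ Oj, ((Inc (bo j)).filter (· ∈ Orb r)).card := Finset.sum_congr rfl l1
      _ = Oj.card * ((Inc (bo j)).filter (· ∈ Orb r)).card := by
          rw [Finset.sum_const, smul_eq_mul]
  -- value of N on a point orbit
  have Nval : ∀ (r : Fin t), ∀ p ∈ Orb r,
      (Orb r).card * N p = Oj.card * ((Inc (bo j)).filter (· ∈ Orb r)).card := by
    intro r p hp
    rw [← sumN r]
    have : ∀ q ∈ Orb r, N q = N p := by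
      intro q hq
      obtain ⟨g, rfl⟩ := (memOrb r q).mp hq
      obtain ⟨h, rfl⟩ := (memOrb r p).mp hp
      have e : (g : G) • po r = (g * h⁻¹) • (h • po r) := by
        rw [smul_smul, mul_assoc, inv_mul_cancel, mul_one]
      show N (g • po r) = N (h • po r)
      rw [e, key1]
    rw [Finset.sum_congr rfl this, Finset.sum_const, smul_eq_mul]
  -- orbits are nonempty
  have orbne : ∀ r : Fin t, 0 < (Orb r).card := by
    intro r
    exact Finset.card_pos.mpr ⟨po r, (memOrb r (po r)).mpr (MulAction.mem_orbit_self _)⟩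
  -- bo i is not in the orbit of bo j
  have hnotin : ∀ l ∈ Oj, bo i ≠ l := by
    intro l hl he
    subst he
    exact hij (ExistsUnique.unique (hbo (bo i)) (MulAction.mem_orbit_self _) ((memOj _).mp hl))
  -- the master count
  have master : ∑ p ∈ Inc (bo i), N p = lam * Oj.card := by
    have hs := swap_count Oj (Inc (bo i)) (fun l p => p ∈ Inc l)
    have l1 : ∀ l ∈ Oj, ((Inc (bo i)).filter (fun p => p ∈ Inc l)).card = lam := by
      intro l hl
      have he : (Inc (bo i)).filter (fun p => p ∈ Inc l) = Inc (bo i) ∩ Inc l := by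
        ext p; simp
      rw [he, hdual _ _ (hnotin l hl)]
    calc ∑ p ∈ Inc (bo i), N p
        = ∑ l ∈ Oj, ((Inc (bo i)).filter (fun p => p ∈ Inc l)).card := hs.symm
      _ = ∑ l ∈ Oj, lam := Finset.sum_congr rfl l1
      _ = lam * Oj.card := by rw [Finset.sum_const, smul_eq_mul, mul_comm]
  -- fiberwise decomposition
  set c : P → Fin t := fun p => (hpo p).choose with hc
  have hcmem : ∀ p : P, p ∈ MulAction.orbit G (po (c p)) := fun p => (hpo p).choose_spec.1
  have hcuniq : ∀ (p : P) (r : Fin t), p ∈ MulAction.orbit G (po r) → c p = r := by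
    intro p r h
    exact ((hpo p).choose_spec.2 r h).symm
  have fib : ∑ r : Fin t, ∑ p ∈ (Inc (bo i)).filter (fun p => c p = r), N p
      = ∑ p ∈ Inc (bo i), N p := Finset.sum_fiberwise _ _ _
  have fibeq : ∀ r : Fin t, (Inc (bo i)).filter (fun p => c p = r)
      = (Inc (bo i)).filter (· ∈ Orb r) := by
    intro r
    ext p
    simp only [Finset.mem_filter, memOrb]
    constructor
    · rintro ⟨h1, rfl⟩; exact ⟨h1, hcmem p⟩
    · rintro ⟨h1, h2⟩; exact ⟨h1, hcuniq p r h2⟩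
  -- now to ℚ
  have main : ∑ r : Fin t, ((Oj.card : ℚ) / ((Orb r).card : ℚ))
      * (((Inc (bo i)).filter (· ∈ Orb r)).card : ℚ)
      * (((Inc (bo j)).filter (· ∈ Orb r)).card : ℚ)
      = lam * (Oj.card : ℚ) := by
    have cast1 : ((∑ p ∈ Inc (bo i), N p : ℕ) : ℚ) = lam * Oj.card := by
      rw [master]; push_cast; ring
    rw [← cast1, ← fib]
    push_cast
    refine Finset.sum_congr rfl ?_
    intro r _
    rw [fibeq r]
    have hterm : ∀ p ∈ (Inc (bo i)).filter (· ∈ Orb r),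
        (N p : ℚ) = (Oj.card : ℚ) * (((Inc (bo j)).filter (· ∈ Orb r)).card : ℚ)
          / ((Orb r).card : ℚ) := by
      intro p hp
      have hp' : p ∈ Orb r := (Finset.mem_filter.mp hp).2
      have hv2 := congrArg (Nat.cast : ℕ → ℚ) (Nval r p hp')
      push_cast at hv2
      have hne : ((Orb r).card : ℚ) ≠ 0 := Nat.cast_ne_zero.mpr (orbne r).ne'
      field_simp
      linear_combination hv2
    rw [Finset.sum_congr rfl hterm, Finset.sum_const, nsmul_eq_mul]
    ring
  calc (∑ r : Fin t,
        ((Nat.card (MulAction.orbit G (bo j)) : ℚ) /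
            (Nat.card (MulAction.orbit G (po r)) : ℚ)) *
          (Set.ncard ((Inc (bo i) : Set P) ∩ MulAction.orbit G (po r)) : ℚ) *
          (Set.ncard ((Inc (bo j) : Set P) ∩ MulAction.orbit G (po r)) : ℚ))
      = ∑ r : Fin t, ((Oj.card : ℚ) / ((Orb r).card : ℚ))
          * (((Inc (bo i)).filter (· ∈ Orb r)).card : ℚ)
          * (((Inc (bo j)).filter (· ∈ Orb r)).card : ℚ) := by
        refine Finset.sum_congr rfl ?_
        intro r _
        rw [cardOj, cardOrb r, gcast (bo i) r, gcast (bo j) r]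
    _ = lam * (Oj.card : ℚ) := main
    _ = lam * (Nat.card (MulAction.orbit G (bo j)) : ℚ) := by rw [cardOj]
end

section
/- There is no 13×13 matrix with non-negative integer entries serving as an orbit matrix for parameters (121,16,2) and orbit lengths distribution 1^4 13^9 in which: (rows 1–4, fixed blocks) each equals a permutation of the type (1,1,1,0 | 13,0,0,0,0,0,0,0,0) satisfying the orbit equations, (rows 5–8) have type (1,0,0,0 | 2,2,2,2,2,2,1,1,1) up to arrangement, and rows 9–13 have type (0,0,0,0 | 4,2,2,2,2,2,2,0,0) up to arrangement, such that all pairwise orbit-matrix product equations Σ_r (Ω_j/ω_r) γ_{ir} γ_{jr} = 2Ω_j + δ_{ij}·14 hold. In particular, two distinct rows of the last type would require Σ_r γ_{ir} γ_{jr} = 26, impossible since all entries in columns 5–13 of such rows are even, making the dot product divisible by 4. -/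
theorem stmt_17_aux (γ : Fin 13 → Fin 13 → ℕ) (i : Fin 13)
    (hz : ({γ i 0, γ i 1, γ i 2, γ i 3} : Multiset ℕ) = {0, 0, 0, 0})
    (he : ({γ i 4, γ i 5, γ i 6, γ i 7, γ i 8, γ i 9, γ i 10, γ i 11, γ i 12} :
          Multiset ℕ) = {4, 2, 2, 2, 2, 2, 2, 0, 0}) :
    ∀ r : Fin 13, ((r : ℕ) < 4 → γ i r = 0) ∧ (4 ≤ (r : ℕ) → 2 ∣ γ i r) := by
  have h0 : ∀ x ∈ ({γ i 0, γ i 1, γ i 2, γ i 3} : Multiset ℕ), x = 0 := by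
    rw [hz]; simp
  have h2 : ∀ x ∈ ({γ i 4, γ i 5, γ i 6, γ i 7, γ i 8, γ i 9, γ i 10, γ i 11,
      γ i 12} : Multiset ℕ), 2 ∣ x := by
    rw [he]; intro x hx; simp at hx; omega
  intro r
  fin_cases r
  · exact ⟨fun _ => h0 (γ i 0) (by simp), fun h => absurd h (by decide)⟩
  · exact ⟨fun _ => h0 (γ i 1) (by simp), fun h => absurd h (by decide)⟩
  · exact ⟨fun _ => h0 (γ i 2) (by simp), fun h => absurd h (by decide)⟩
  · exact ⟨fun _ => h0 (γ i 3) (by simp), fun h => absurd h (by decide)⟩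
  · exact ⟨fun h => absurd h (by decide), fun _ => h2 (γ i 4) (by simp)⟩
  · exact ⟨fun h => absurd h (by decide), fun _ => h2 (γ i 5) (by simp)⟩
  · exact ⟨fun h => absurd h (by decide), fun _ => h2 (γ i 6) (by simp)⟩
  · exact ⟨fun h => absurd h (by decide), fun _ => h2 (γ i 7) (by simp)⟩
  · exact ⟨fun h => absurd h (by decide), fun _ => h2 (γ i 8) (by simp)⟩
  · exact ⟨fun h => absurd h (by decide), fun _ => h2 (γ i 9) (by simp)⟩
  · exact ⟨fun h => absurd h (by decide), fun _ => h2 (γ i 10) (by simp)⟩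
  · exact ⟨fun h => absurd h (by decide), fun _ => h2 (γ i 11) (by simp)⟩
  · exact ⟨fun h => absurd h (by decide), fun _ => h2 (γ i 12) (by simp)⟩

/-- There is no 13×13 orbit matrix for parameters (121,16,2) and orbit lengths
distribution `1⁴ 13⁹` in which rows 1–4 have type `(1,1,1,0 | 13,0,…,0)`,
rows 5–8 have type `(1,0,0,0 | 2,2,2,2,2,2,1,1,1)`, rows 9–13 have type
`(0,0,0,0 | 4,2,2,2,2,2,2,0,0)` (each up to arrangement within the fixed part
and the part of orbits of length 13), and all orbit-matrix product equations
`∑ r (Ω j / ω r) γ i r γ j r = 2 Ω j + δᵢⱼ·14` hold. -/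
theorem stmt_17 :
    ¬ ∃ γ : Fin 13 → Fin 13 → ℕ,
      (∀ i : Fin 13, i.val < 4 →
        ({γ i 0, γ i 1, γ i 2, γ i 3} : Multiset ℕ) = {1, 1, 1, 0} ∧
        ({γ i 4, γ i 5, γ i 6, γ i 7, γ i 8, γ i 9, γ i 10, γ i 11, γ i 12} :
          Multiset ℕ) = {13, 0, 0, 0, 0, 0, 0, 0, 0}) ∧
      (∀ i : Fin 13, 4 ≤ i.val → i.val < 8 →
        ({γ i 0, γ i 1, γ i 2, γ i 3} : Multiset ℕ) = {1, 0, 0, 0} ∧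
        ({γ i 4, γ i 5, γ i 6, γ i 7, γ i 8, γ i 9, γ i 10, γ i 11, γ i 12} :
          Multiset ℕ) = {2, 2, 2, 2, 2, 2, 1, 1, 1}) ∧
      (∀ i : Fin 13, 8 ≤ i.val →
        ({γ i 0, γ i 1, γ i 2, γ i 3} : Multiset ℕ) = {0, 0, 0, 0} ∧
        ({γ i 4, γ i 5, γ i 6, γ i 7, γ i 8, γ i 9, γ i 10, γ i 11, γ i 12} :
          Multiset ℕ) = {4, 2, 2, 2, 2, 2, 2, 0, 0}) ∧
      (∀ i j : Fin 13,
        (∑ r : Fin 13,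
            (((if (j : ℕ) < 4 then 1 else 13 : ℕ) : ℚ) /
                ((if (r : ℕ) < 4 then 1 else 13 : ℕ) : ℚ)) *
              (γ i r : ℚ) * (γ j r : ℚ))
          = 2 * ((if (j : ℕ) < 4 then 1 else 13 : ℕ) : ℚ) +
              (if i = j then 14 else 0)) := by
  rintro ⟨γ, _, _, h3, h4⟩
  have f8 := stmt_17_aux γ 8 (h3 8 (by decide)).1 (h3 8 (by decide)).2
  have f9 := stmt_17_aux γ 9 (h3 9 (by decide)).1 (h3 9 (by decide)).2
  have key := h4 8 9
  rw [if_neg (by decide : ¬(8 : Fin 13) = 9)] at key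
  have hsum : (∑ r : Fin 13,
      (((if ((9 : Fin 13) : ℕ) < 4 then 1 else 13 : ℕ) : ℚ) /
          ((if (r : ℕ) < 4 then 1 else 13 : ℕ) : ℚ)) *
        (γ 8 r : ℚ) * (γ 9 r : ℚ))
      = ((∑ r : Fin 13, γ 8 r * γ 9 r : ℕ) : ℚ) := by
    push_cast
    apply Finset.sum_congr rfl
    intro r _
    by_cases hr : (r : ℕ) < 4
    · simp [hr, (f8 r).1 hr]
    · rw [if_neg hr, if_neg (by decide : ¬((9 : Fin 13) : ℕ) < 4)]
      rw [div_self (by norm_num : (13 : ℚ) ≠ 0), one_mul]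
  rw [hsum, if_neg (by decide : ¬((9 : Fin 13) : ℕ) < 4)] at key
  norm_num at key
  have key' : (∑ r : Fin 13, γ 8 r * γ 9 r) = 26 := by exact_mod_cast key
  have hd : 4 ∣ ∑ r : Fin 13, γ 8 r * γ 9 r := by
    apply Finset.dvd_sum
    intro r _
    by_cases hr : (r : ℕ) < 4
    · simp [(f8 r).1 hr]
    · obtain ⟨a, ha⟩ := (f8 r).2 (by omega)
      obtain ⟨b, hb⟩ := (f9 r).2 (by omega)
      exact ⟨a * b, by rw [ha, hb]; ring⟩
  omega
end
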